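/- For all s, t ∈ μ_r, v ∈ A_1, and w ∈ A_r: v y ⋄_s w(z − z_t^δ) = (v y ⋄_s w − v ⋄_s w z_t^δ)(y ⋄_t 1). -/

import Mathlib

open FreeAlgebra

/-- Alphabet of `A_1 = ℚ⟨x,y⟩`. -/
inductive LetA : Type | x : LetA | y : LetA

/-- Alphabet of `A_r = ℚ⟨x, y_s : s ∈ μ_r⟩`; the group `G` plays the role of `μ_r`. -/
inductive LetR (G : Type) : Type | x : LetR G | y : G → LetR G

/-- `A_1 = ℚ⟨x, y⟩`. -/
abbrev A1 : Type := FreeAlgebra ℚ LetA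

/-- `A_r = ℚ⟨x, y_s : s ∈ μ_r⟩`. -/
abbrev Ar (G : Type) : Type := FreeAlgebra ℚ (LetR G)

noncomputable def X1 : A1 := ι ℚ LetA.x
noncomputable def Y1 : A1 := ι ℚ LetA.y

variable {G : Type} [CommGroup G]

noncomputable def Xr : Ar G := ι ℚ LetR.x
noncomputable def Yr (s : G) : Ar G := ι ℚ (LetR.y s)

/-- `z = x + y_1`. -/
noncomputable def zet : Ar G := Xr + Yr 1

open scoped Classical in
/-- `z_s^δ = x + δ(s) y_s` with `δ(1) = 0`, `δ(s) = 1` otherwise. -/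
noncomputable def zdel (s : G) : Ar G := if s = 1 then Xr else Xr + Yr s

/-- The involutive automorphism `φ` of `A_r`: `φ(x) = z`, `φ(y_s) = z_s^δ - z`. -/
noncomputable def phi : Ar G →ₐ[ℚ] Ar G :=
  lift ℚ (fun l => match l with
    | LetR.x => zet
    | LetR.y s => zdel s - zet)

/-- The natural embedding `A_1 → A_r`, `x ↦ x`, `y ↦ y_1`. -/
noncomputable def jm : A1 →ₐ[ℚ] Ar G :=
  lift ℚ (fun l => match l with
    | LetA.x => Xr
    | LetA.y => Yr 1)

open scoped Classical in
/-- The anti-automorphism `τ` of `A_r`: `τ(x) = y_1`, `τ(y_1) = x`, `τ(y_s) = -y_s` (`s ≠ 1`). -/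
noncomputable def tauR : Ar G →ₗ[ℚ] Ar G :=
  (MulOpposite.opLinearEquiv ℚ).symm.toLinearMap ∘ₗ
    (lift ℚ (fun l => match l with
      | LetR.x => MulOpposite.op (Yr 1)
      | LetR.y s => MulOpposite.op (if s = 1 then Xr else -(Yr s)) ) :
        Ar G →ₐ[ℚ] (Ar G)ᵐᵒᵖ).toLinearMap

/-- The anti-automorphism `τ` of `A_1`: `τ(x) = y`, `τ(y) = x`. -/
noncomputable def tau1 : A1 →ₗ[ℚ] A1 :=
  (MulOpposite.opLinearEquiv ℚ).symm.toLinearMap ∘ₗ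
    (lift ℚ (fun l => match l with
      | LetA.x => MulOpposite.op Y1
      | LetA.y => MulOpposite.op X1) : A1 →ₐ[ℚ] A1ᵐᵒᵖ).toLinearMap

/-- `wordP [(a₁,s₁),...,(a_l,s_l)] = x^{a₁} y_{s₁} ⋯ x^{a_l} y_{s_l}`,
i.e. the word `z_{a₁+1, s₁} ⋯ z_{a_l+1, s_l}`. -/
noncomputable def wordP (L : List (ℕ × G)) : Ar G :=
  (L.map (fun p => Xr ^ p.1 * Yr p.2)).prod

/-- Cumulative-product reindexing of subscripts: this realizes the composition `I ∘ M_s`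
on subscript lists, sending `(s₁, s₂, …, s_l)` to `(s s₁, s s₁ s₂, …, s s₁ ⋯ s_l)`. -/
def cumul : G → List (ℕ × G) → List (ℕ × G)
  | _, [] => []
  | g, p :: L => (p.1, g * p.2) :: cumul (g * p.2) L

/-- All the data entering the definition of the diamond products `⋄_s`:
the harmonic product `*`, the maps `ψ_s = φ ∘ I ∘ M_s`, and the family of
`ℚ`-bilinear diamond products `D s : A_1 × A_r → A_r` (together with the
corestriction `D1` of `⋄_1` to `A_1 × A_1 → A_1`), each characterized by its
defining recursive rules. -/
structure DiamondSetup (G : Type) [CommGroup G] where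
  /-- the harmonic product -/
  hst : Ar G →ₗ[ℚ] Ar G →ₗ[ℚ] Ar G
  one_hst : ∀ w, hst 1 w = w
  hst_one : ∀ v, hst v 1 = v
  hst_xr : ∀ v w, hst (v * Xr) w = hst v w * Xr
  hst_xl : ∀ v w, hst v (w * Xr) = hst v w * Xr
  hst_yy : ∀ (v w : Ar G) (s t : G), hst (v * Yr s) (w * Yr t) =
      hst v (w * Yr t) * Yr s + hst (v * Yr s) w * Yr t + hst v w * (Xr * Yr (s * t))
  /-- the linear automorphisms `ψ_s = φ ∘ I ∘ M_s` -/
  psi : G → (Ar G ≃ₗ[ℚ] Ar G)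
  psi_spec : ∀ (s : G) (L : List (ℕ × G)) (a : ℕ),
      psi s (wordP L * Xr ^ a) = phi (wordP (cumul s L) * Xr ^ a)
  /-- the diamond products `⋄_s : A_1 × A_r → A_r` -/
  D : G → A1 →ₗ[ℚ] Ar G →ₗ[ℚ] Ar G
  one_D : ∀ (s : G) (w : Ar G), D s 1 w = w
  D_one : ∀ (s : G) (v : A1), D s v 1 = psi s (phi (jm v))
  Dxx : ∀ (s : G) (v : A1) (w : Ar G), D s (v * X1) (w * Xr) =
      D s v (w * Xr) * Xr - D s (v * Y1) w * Xr
  Dyx : ∀ (s : G) (v : A1) (w : Ar G), D s (v * Y1) (w * Xr) =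
      D s v (w * Xr) * Yr 1 + D s (v * Y1) w * Xr
  Dxy : ∀ (s : G) (v : A1) (w : Ar G), D s (v * X1) (w * Yr 1) =
      D s v (w * Yr 1) * Xr + D s (v * X1) w * Yr 1
  Dyy : ∀ (s : G) (v : A1) (w : Ar G), D s (v * Y1) (w * Yr 1) =
      D s v (w * Yr 1) * Yr 1 - D s (v * X1) w * Yr 1
  Dxyt : ∀ (s t : G), t ≠ 1 → ∀ (v : A1) (w : Ar G), D s (v * X1) (w * Yr t) =
      D s v (w * Yr t) * Xr + D s v (w * (Xr + Yr t)) * Yr t - D s (v * Y1) w * Yr t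
  Dyyt : ∀ (s t : G), t ≠ 1 → ∀ (v : A1) (w : Ar G), D s (v * Y1) (w * Yr t) =
      D s v (w * Yr t) * Yr 1 - D s v (w * (Xr + Yr t)) * Yr t + D s (v * Y1) w * Yr t
  /-- `⋄_1` as a product `A_1 × A_1 → A_1` -/
  D1 : A1 →ₗ[ℚ] A1 →ₗ[ℚ] A1
  D1_spec : ∀ u v : A1, jm (D1 u v) = D 1 u (jm v)

/-
Two transfer rules carry the argument: `(v z) ⋄_s w = (v ⋄_s w) z`, because for `w`
ending in `x`, `y` or `y_t` the rules for `vx ⋄_s w` and `vy ⋄_s w` add up to it, and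
`v ⋄_s (w z) = (v ⋄_s w) z`, by induction on `v` using the first rule. Together they
give `v ⋄_s wx + v ⋄_s wy = vx ⋄_s w + vy ⋄_s w`; substituting this into the rules for
`vy ⋄_s wy` and `vy ⋄_s wy_t` factors the left-hand side, and
`y ⋄_t 1 = ψ_t(−y) = z − z_t^δ`.
-/

theorem FreeAlgebra.induction_right {R X : Type*} [CommSemiring R]
    {motive : FreeAlgebra R X → Prop} (one : motive 1)
    (add : ∀ a b, motive a → motive b → motive (a + b))
    (smul : ∀ (r : R) a, motive a → motive (r • a))
    (mul_ι : ∀ a x, motive a → motive (a * ι R x)) (u : FreeAlgebra R X) : motive u := by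
  suffices h : ∀ a, motive a → motive (a * u) by simpa using h 1 one
  induction u using FreeAlgebra.induction with
  | grade0 r =>
    intro a ha
    rw [← Algebra.commutes, ← Algebra.smul_def]
    exact smul r a ha
  | grade1 x => exact fun a => mul_ι a x
  | mul u v hu hv =>
    intro a ha
    rw [← mul_assoc]
    exact hv _ (hu a ha)
  | add u v hu hv =>
    intro a ha
    rw [mul_add]
    exact add _ _ (hu a ha) (hv a ha)

theorem wordP_append_singleton {G : Type} (L : List (ℕ × G)) (p : ℕ × G) :
    wordP (L ++ [p]) = wordP L * (Xr ^ p.1 * Yr p.2) := by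
  simp [wordP]

theorem mem_span_wordP_mul_Xr_pow {G : Type} (u : Ar G) :
    u ∈ Submodule.span ℚ
      (Set.range fun p : List (ℕ × G) × ℕ => wordP p.1 * Xr ^ p.2) := by
  set M := Submodule.span ℚ (Set.range fun p : List (ℕ × G) × ℕ => wordP p.1 * Xr ^ p.2)
  have mul_ι_mem : ∀ l, M ≤ M.comap (LinearMap.mulRight ℚ (ι ℚ l)) := by
    intro l
    rw [Submodule.span_le]
    rintro _ ⟨⟨L, n⟩, rfl⟩
    cases l with
    | x => exact Submodule.subset_span ⟨(L, n + 1), by simp [pow_succ, mul_assoc, Xr]⟩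
    | y g =>
      exact Submodule.subset_span
        ⟨(L ++ [(n, g)], 0), by simp [wordP_append_singleton, mul_assoc, Yr]⟩
  induction u using FreeAlgebra.induction_right with
  | one => exact Submodule.subset_span ⟨([], 0), by simp [wordP]⟩
  | add a b ha hb => exact M.add_mem ha hb
  | smul r a ha => exact M.smul_mem r ha
  | mul_ι a l ha => exact mul_ι_mem l ha

theorem jm_X1 : (jm X1 : Ar G) = Xr := by simp [jm, X1, Xr]

theorem jm_Y1 : (jm Y1 : Ar G) = Yr 1 := by simp [jm, Y1, Yr]

theorem zdel_one : (zdel 1 : Ar G) = Xr := by simp [zdel]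

theorem zdel_of_ne_one {t : G} (ht : t ≠ 1) : (zdel t : Ar G) = Xr + Yr t := by simp [zdel, ht]

theorem phi_Xr : phi (Xr : Ar G) = zet := by simp [phi, Xr]

theorem phi_Yr (u : G) : phi (Yr u : Ar G) = zdel u - zet := by simp [phi, Yr]

theorem phi_zet : phi (zet : Ar G) = Xr := by
  rw [zet, map_add, phi_Xr, phi_Yr, zdel_one, add_sub_cancel]

namespace DiamondSetup

variable (S : DiamondSetup G)

theorem psi_Yr (s u : G) : S.psi s (Yr u) = zdel (s * u) - zet := by
  simpa [wordP, cumul, phi_Yr] using S.psi_spec s [(0, u)] 0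

theorem psi_mul_Xr (s : G) (u : Ar G) : S.psi s (u * Xr) = S.psi s u * zet := by
  induction mem_span_wordP_mul_Xr_pow u using Submodule.span_induction with
  | mem _ h =>
    obtain ⟨⟨L, n⟩, rfl⟩ := h
    rw [mul_assoc, ← pow_succ, S.psi_spec, S.psi_spec, pow_succ, ← mul_assoc, map_mul, phi_Xr]
  | zero => simp
  | add a b _ _ ha hb => rw [add_mul, map_add, map_add, add_mul, ha, hb]
  | smul r a _ ha => rw [smul_mul_assoc, map_smul, map_smul, smul_mul_assoc, ha]

theorem D_Y1_one (t : G) : S.D t Y1 1 = zet - zdel t := by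
  rw [S.D_one, jm_Y1, phi_Yr, zdel_one, show (Xr : Ar G) - zet = -Yr 1 by rw [zet]; abel,
    map_neg, psi_Yr, mul_one, neg_sub]

theorem D_mul_X1_add_Y1 (s : G) (v : A1) (w : Ar G) :
    S.D s (v * (X1 + Y1)) w = S.D s v w * zet := by
  have split : ∀ w, S.D s (v * (X1 + Y1)) w = S.D s (v * X1) w + S.D s (v * Y1) w := by
    intro w
    rw [mul_add, map_add, LinearMap.add_apply]
  induction w using FreeAlgebra.induction_right with
  | one =>
    rw [S.D_one, S.D_one, map_mul, map_add, jm_X1, jm_Y1, ← zet, map_mul, phi_zet,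
      psi_mul_Xr]
  | add a b ha hb => rw [map_add, map_add, ha, hb, add_mul]
  | smul r a ha => rw [map_smul, map_smul, ha, smul_mul_assoc]
  | mul_ι a l _ =>
    rw [split, zet]
    cases l with
    | x =>
      rw [← Xr, S.Dxx, S.Dyx]
      noncomm_ring
    | y u =>
      rw [← Yr]
      rcases eq_or_ne u 1 with rfl | hu
      · rw [S.Dxy, S.Dyy]
        noncomm_ring
      · rw [S.Dxyt s u hu, S.Dyyt s u hu]
        noncomm_ring

theorem D_mul_zet (s : G) (v : A1) (w : Ar G) :
    S.D s v (w * zet) = S.D s v w * zet := by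
  induction v using FreeAlgebra.induction_right generalizing w with
  | one => rw [S.one_D, S.one_D]
  | add a b ha hb => rw [map_add, LinearMap.add_apply, LinearMap.add_apply, ha, hb, add_mul]
  | smul r a ha =>
    rw [map_smul, LinearMap.smul_apply, LinearMap.smul_apply, ha, smul_mul_assoc]
  | mul_ι a l ih =>
    have transfer : S.D s a (w * Yr 1) =
        S.D s (a * X1) w + S.D s (a * Y1) w - S.D s a (w * Xr) := by
      rw [eq_sub_iff_add_eq', ← map_add, ← mul_add, ← zet, ih, ← D_mul_X1_add_Y1, mul_add,
        map_add, LinearMap.add_apply]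
    rw [zet, mul_add, map_add]
    cases l with
    | x =>
      rw [← X1, S.Dxx, S.Dxy, transfer]
      noncomm_ring
    | y =>
      rw [← Y1, S.Dyx, S.Dyy, transfer]
      noncomm_ring

theorem D_mul_Xr_add_D_mul_Yr_one (s : G) (v : A1) (w : Ar G) :
    S.D s v (w * Xr) + S.D s v (w * Yr 1) = S.D s (v * X1) w + S.D s (v * Y1) w := by
  rw [← map_add, ← mul_add, ← zet, D_mul_zet, ← D_mul_X1_add_Y1, mul_add, map_add,
    LinearMap.add_apply]

end DiamondSetup

/-- For all `s, t ∈ μ_r`, `v ∈ A_1`, `w ∈ A_r`: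
`v y ⋄_s w(z − z_t^δ) = (v y ⋄_s w − v ⋄_s w z_t^δ)(y ⋄_t 1)`. -/
theorem statement10 {G : Type} [CommGroup G] (S : DiamondSetup G)
    (s t : G) (v : A1) (w : Ar G) :
    S.D s (v * Y1) (w * (zet - zdel t)) =
      (S.D s (v * Y1) w - S.D s v (w * zdel t)) * (S.D t Y1 1) := by
  have transfer : S.D s v (w * Yr 1) =
      S.D s (v * X1) w + S.D s (v * Y1) w - S.D s v (w * Xr) := by
    rw [eq_sub_iff_add_eq', S.D_mul_Xr_add_D_mul_Yr_one]
  rw [S.D_Y1_one]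
  rcases eq_or_ne t 1 with rfl | ht
  · rw [zdel_one, show (zet : Ar G) - Xr = Yr 1 by rw [zet]; abel, S.Dyy, transfer]
    noncomm_ring
  · rw [zdel_of_ne_one ht, show (zet : Ar G) - (Xr + Yr t) = Yr 1 - Yr t by rw [zet]; abel,
      mul_sub, map_sub, S.Dyy, S.Dyyt s t ht, mul_add, map_add, transfer]
    noncomm_ring
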